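/- Let n ≥ 2 and define u(x) = x₁ x₂ (log(R/|x|))² for x ∈ ℝⁿ \ {0}. There exists R₀ > 1 such that for every R ≥ R₀ and every x with 0 < |x| ≤ 1, the mixed second partial derivative satisfies ∂₁∂₂ u(x) ≥ (1/2)·(log(R/|x|))². -/

import Mathlib

/-!
Write `u z = z₁ z₂ φ (‖z‖²)` with `φ s = (log R - log s / 2)²`. The chain rule gives, at `s = ‖x‖²`,
`∂₁∂₂u = φ + 2 (x₁² + x₂²) φ' + 4 x₁² x₂² φ''`, where `φ' = -L / s` and `φ'' = (1/2 + L) / s² ≥ 0`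
for `L = log (R / ‖x‖)`. Since `x₁² + x₂² ≤ s`, this is at least `L² - 2L ≥ L² / 2` as soon as
`L ≥ 4`, which holds for `R ≥ e⁴` and `‖x‖ ≤ 1`.
-/

open Real Filter Topology

lemma hasFDerivAt_comp_norm_sq {F : Type*} [NormedAddCommGroup F] [InnerProductSpace ℝ F]
    {φ : ℝ → ℝ} {d : ℝ} {y : F} (hφ : HasDerivAt φ d (‖y‖ ^ 2)) :
    HasFDerivAt (fun z : F => φ (‖z‖ ^ 2)) ((2 * d) • innerSL ℝ y) y :=
  (hφ.comp_hasFDerivAt y (hasStrictFDerivAt_norm_sq y).hasFDerivAt).congr_fderiv <| by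
    ext v
    simp only [smul_apply, coe_innerSL_apply, nsmul_eq_mul, Nat.cast_ofNat, smul_eq_mul]
    ring

section CoordMulCoordMulRadial

variable {ι : Type*} [Fintype ι] [DecidableEq ι] {i j : ι} {φ φ' : ℝ → ℝ} {d : ℝ}

lemma fderiv_coord_mul_coord_mul_comp_norm_sq_single (hij : i ≠ j) {y : EuclideanSpace ℝ ι}
    (hφ : HasDerivAt φ d (‖y‖ ^ 2)) :
    fderiv ℝ (fun z : EuclideanSpace ℝ ι => z i * z j * φ (‖z‖ ^ 2)) y
        (EuclideanSpace.single j 1) = y i * φ (‖y‖ ^ 2) + 2 * y i * y j ^ 2 * d := by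
  have hu : HasFDerivAt (fun z : EuclideanSpace ℝ ι => z i * z j * φ (‖z‖ ^ 2)) _ y :=
    ((PiLp.hasFDerivAt_apply (𝕜 := ℝ) 2 y i).mul (PiLp.hasFDerivAt_apply (𝕜 := ℝ) 2 y j)).mul
      (hasFDerivAt_comp_norm_sq hφ)
  rw [hu.fderiv]
  simp only [Pi.mul_apply, smul_add, add_apply, smul_apply, coe_innerSL_apply,
    EuclideanSpace.inner_single_right, ringHom_apply, one_mul, smul_eq_mul, PiLp.proj_apply,
    PiLp.single_eq_same, mul_one, ne_eq, hij, not_false_eq_true, PiLp.single_eq_of_ne, mul_zero,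
    add_zero]
  ring

theorem fderiv_fderiv_coord_mul_coord_mul_comp_norm_sq (hij : i ≠ j) {x : EuclideanSpace ℝ ι}
    (hφ : ∀ᶠ s in 𝓝 (‖x‖ ^ 2), HasDerivAt φ (φ' s) s) (hφ' : HasDerivAt φ' d (‖x‖ ^ 2)) :
    fderiv ℝ (fun y : EuclideanSpace ℝ ι =>
        fderiv ℝ (fun z : EuclideanSpace ℝ ι => z i * z j * φ (‖z‖ ^ 2)) y
          (EuclideanSpace.single j 1)) x (EuclideanSpace.single i 1) =
      φ (‖x‖ ^ 2) + 2 * (x i ^ 2 + x j ^ 2) * φ' (‖x‖ ^ 2) + 4 * x i ^ 2 * x j ^ 2 * d := by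
  have hfirst : (fun y : EuclideanSpace ℝ ι =>
        fderiv ℝ (fun z : EuclideanSpace ℝ ι => z i * z j * φ (‖z‖ ^ 2)) y
          (EuclideanSpace.single j 1)) =ᶠ[𝓝 x]
      fun y => y i * φ (‖y‖ ^ 2) + 2 * y i * y j ^ 2 * φ' (‖y‖ ^ 2) := by
    filter_upwards [((continuous_norm.pow 2).tendsto x).eventually hφ] with y hy
    exact fderiv_coord_mul_coord_mul_comp_norm_sq_single hij hy
  have hi := PiLp.hasFDerivAt_apply (𝕜 := ℝ) 2 x i
  have hsecond : HasFDerivAt (fun y : EuclideanSpace ℝ ι =>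
      y i * φ (‖y‖ ^ 2) + 2 * y i * y j ^ 2 * φ' (‖y‖ ^ 2)) _ x :=
    (hi.mul (hasFDerivAt_comp_norm_sq hφ.self_of_nhds)).add
      (((hi.const_mul 2).mul ((PiLp.hasFDerivAt_apply (𝕜 := ℝ) 2 x j).pow 2)).mul
        (hasFDerivAt_comp_norm_sq hφ'))
  rw [hfirst.fderiv_eq, hsecond.fderiv]
  simp only [Pi.mul_apply, Nat.add_one_sub_one, pow_one, nsmul_eq_mul, Nat.cast_ofNat, smul_add,
    add_apply, smul_apply, coe_innerSL_apply, EuclideanSpace.inner_single_right, ringHom_apply,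
    one_mul, smul_eq_mul, PiLp.proj_apply, PiLp.single_eq_same, mul_one, ne_eq, Ne.symm hij,
    not_false_eq_true, PiLp.single_eq_of_ne, mul_zero, zero_add]
  ring

lemma sq_add_sq_le_norm_sq (hij : i ≠ j) (x : EuclideanSpace ℝ ι) :
    x i ^ 2 + x j ^ 2 ≤ ‖x‖ ^ 2 := by
  rw [EuclideanSpace.norm_sq_eq, ← Finset.sum_pair (f := fun k => x k ^ 2) hij]
  simpa only [Real.norm_eq_abs, sq_abs] using
    Finset.sum_le_univ_sum_of_nonneg (fun k => sq_nonneg (x k))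

end CoordMulCoordMulRadial

noncomputable def logRadial (R s : ℝ) : ℝ := log R - log s / 2

lemma log_div_norm_eq_logRadial {E : Type*} [SeminormedAddCommGroup E] {R : ℝ} (hR : R ≠ 0)
    {z : E} (hz : ‖z‖ ≠ 0) : log (R / ‖z‖) = logRadial R (‖z‖ ^ 2) := by
  rw [logRadial, log_div hR hz, log_pow]
  push_cast
  ring

section logRadial

variable {R s : ℝ}

lemma hasDerivAt_logRadial (hs : s ≠ 0) : HasDerivAt (logRadial R) (-(2 * s)⁻¹) s :=
  (((hasDerivAt_log hs).div_const 2).const_sub (log R)).congr_deriv (by ring)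

lemma hasDerivAt_logRadial_sq (hs : s ≠ 0) :
    HasDerivAt (fun t => logRadial R t ^ 2) (-logRadial R s / s) s :=
  ((hasDerivAt_logRadial hs).pow 2).congr_deriv (by field_simp; ring)

lemma hasDerivAt_neg_logRadial_div (hs : s ≠ 0) :
    HasDerivAt (fun t => -logRadial R t / t) ((1 / 2 + logRadial R s) / s ^ 2) s :=
  ((hasDerivAt_logRadial hs).neg.div (hasDerivAt_id s) hs).congr_deriv
    (by simp only [id, Pi.neg_apply]; field_simp; ring)

end logRadial

lemma half_sq_le_of_four_le {L s a b : ℝ} (hL : 4 ≤ L) (hs : 0 < s) (hab : a + b ≤ s)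
    (ha : 0 ≤ a) (hb : 0 ≤ b) :
    1 / 2 * L ^ 2 ≤ L ^ 2 + 2 * (a + b) * (-L / s) + 4 * a * b * ((1 / 2 + L) / s ^ 2) := by
  have hdrift : -(2 * L) ≤ 2 * (a + b) * (-L / s) := by
    rw [mul_div_assoc', le_div_iff₀ hs]
    nlinarith
  have hcross : 0 ≤ 4 * a * b * ((1 / 2 + L) / s ^ 2) := by
    have : 0 ≤ 1 / 2 + L := by linarith
    positivity
  nlinarith

-- At `z = 0` the two logarithms differ (`log 0 = 0`), but the factor `z i` kills both sides.
lemma coord_mul_coord_mul_log_div_norm_sq_eq {ι : Type*} [Fintype ι] {R : ℝ} (hR : R ≠ 0)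
    (i j : ι) :
    (fun z : EuclideanSpace ℝ ι => z i * z j * log (R / ‖z‖) ^ 2) =
      fun z => z i * z j * logRadial R (‖z‖ ^ 2) ^ 2 := by
  funext z
  rcases eq_or_ne z 0 with rfl | hz
  · simp
  · rw [log_div_norm_eq_logRadial hR (norm_ne_zero_iff.2 hz)]

/-- For `u x = x₁ x₂ (log (R/‖x‖))²`, there is `R₀ > 1` such that for every `R ≥ R₀`
and every `x` with `0 < ‖x‖ ≤ 1`, the mixed second partial derivative satisfies
`∂₁∂₂ u (x) ≥ (1/2) (log (R/‖x‖))²`. -/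
theorem bmo_counterexample_mixed_derivative_lower_bound
    (n : ℕ) (hn : 2 ≤ n) :
    ∃ R₀ : ℝ, 1 < R₀ ∧ ∀ R : ℝ, R₀ ≤ R →
      ∀ x : EuclideanSpace ℝ (Fin n), 0 < ‖x‖ → ‖x‖ ≤ 1 →
        (1 / 2) * (log (R / ‖x‖)) ^ 2 ≤
          fderiv ℝ
            (fun y : EuclideanSpace ℝ (Fin n) =>
              fderiv ℝ
                (fun z : EuclideanSpace ℝ (Fin n) =>
                  z (⟨0, by omega⟩ : Fin n) * z (⟨1, by omega⟩ : Fin n) *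
                    (log (R / ‖z‖)) ^ 2)
                y (EuclideanSpace.single (⟨1, by omega⟩ : Fin n) 1))
            x (EuclideanSpace.single (⟨0, by omega⟩ : Fin n) 1) := by
  refine ⟨exp 4, by linarith [add_one_le_exp (4 : ℝ)], fun R hR x hx hx1 => ?_⟩
  have hij : (⟨0, by omega⟩ : Fin n) ≠ ⟨1, by omega⟩ := by simp [Fin.ext_iff]
  have hR0 : 0 < R := (exp_pos 4).trans_le hR
  have hs : 0 < ‖x‖ ^ 2 := by positivity
  have hL : 4 ≤ logRadial R (‖x‖ ^ 2) := by
    have hlogR : 4 ≤ log R := (le_log_iff_exp_le hR0).2 hR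
    have hlogs : log (‖x‖ ^ 2) ≤ 0 := log_nonpos hs.le (pow_le_one₀ hx.le hx1)
    rw [logRadial]
    linarith
  have hφ : ∀ᶠ t in 𝓝 (‖x‖ ^ 2), HasDerivAt (fun t => logRadial R t ^ 2) (-logRadial R t / t) t :=
    (eventually_ne_nhds hs.ne').mono fun t ht => hasDerivAt_logRadial_sq ht
  rw [coord_mul_coord_mul_log_div_norm_sq_eq hR0.ne',
    fderiv_fderiv_coord_mul_coord_mul_comp_norm_sq hij hφ (hasDerivAt_neg_logRadial_div hs.ne'),
    log_div_norm_eq_logRadial hR0.ne' hx.ne']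
  exact half_sq_le_of_four_le hL hs (sq_add_sq_le_norm_sq hij x) (sq_nonneg _) (sq_nonneg _)
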